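/- Let 2 ≤ k < n−1 and let f be a function on S^{n−1}. For v ∈ S^{n−k−1} and w ∈ S^k, let ξ(v,w) = T_v({η ∈ ℝ^{k+1} : η·w = 0}), a k-dimensional subspace of ℝ^n. Then ξ(v,w) is contained in ℝv ⊕ ℝ^k, the map T_v carries S^k_± ∩ w^⊥ isometrically onto S^{n−1}_± ∩ ξ(v,w), and whenever the integrals are absolutely convergent one has (F_k^± f)(ξ(v,w)) = (F̃_k^± f)(v,w), i.e., the restriction of the hemispherical transform F_k^± f to subspaces of the form ξ(v,w) coincides with the codimension-one hemispherical Funk transform on S^k of the rotated function η ↦ f(T_v η). -/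

import Mathlib

open MeasureTheory Metric
open scoped ENNReal RealInnerProductSpace

noncomputable section

abbrev E (n : ℕ) := EuclideanSpace ℝ (Fin n)

def lastCoord {n : ℕ} (x : E n) : ℝ :=
  if h : 0 < n then x ⟨n - 1, Nat.sub_lt h one_pos⟩ else 0

/-- The coordinate subspace `{x : x_j = 0 for all j < m}` (1-based coordinates `m+1,…,n`). -/
def coordZeroLT (n m : ℕ) : Submodule ℝ (E n) where
  carrier := {x | ∀ j : Fin n, (j : ℕ) < m → x j = 0}
  add_mem' := by
    intro a b ha hb j hj
    simp [PiLp.add_apply, ha j hj, hb j hj]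
  zero_mem' := by intro j hj; rfl
  smul_mem' := by
    intro c a ha j hj
    simp [PiLp.smul_apply, ha j hj]

/-- The subset of `ℝ^n` with vanishing coordinates `x_j` for `j ≥ m` (1-based `j > m`). -/
def coordZeroGE (n m : ℕ) : Set (E n) := {x | ∀ j : Fin n, m ≤ (j : ℕ) → x j = 0}

/-- The `i`-th coordinate functional on `ℝ^n` as a linear map. -/
def coordL (n : ℕ) (i : Fin n) : E n →ₗ[ℝ] ℝ := EuclideanSpace.projₗ i

/-- The linear isometry `T_v : ℝ^{k+1} → ℝ^n`, `T_v (t e_{n-k} + y) = t v + y`, extended to a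
linear map on all of `ℝ^n` (it sends `e_{n-k}` to `v`, keeps `e_{n-k+1},…,e_n`, and kills the
remaining basis vectors). -/
def Tv (n k : ℕ) (v : E n) : E n →ₗ[ℝ] E n :=
  (if h : n - k - 1 < n then LinearMap.smulRight (coordL n ⟨n - k - 1, h⟩) v else 0)
    + ∑ j ∈ Finset.univ.filter (fun j : Fin n => n - k ≤ (j : ℕ)),
        LinearMap.smulRight (coordL n j) (EuclideanSpace.single j 1)

/-- The sphere `S^{n-k-1} = S^{n-1} ∩ ℝ^{n-k}`. -/
def sphNK (n k : ℕ) : Set (E n) := Metric.sphere (0 : E n) 1 ∩ coordZeroGE n (n - k)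

/-- The sphere `S^k = S^{n-1} ∩ ℝ^{k+1}`. -/
def sphK (n k : ℕ) : Set (E n) :=
  Metric.sphere (0 : E n) 1 ∩ (coordZeroLT n (n - k - 1) : Set (E n))

/-- The hemispheres `S^k_±`. -/
def sphKplus (n k : ℕ) : Set (E n) := {θ ∈ sphK n k | 0 < lastCoord θ}
def sphKminus (n k : ℕ) : Set (E n) := {θ ∈ sphK n k | lastCoord θ < 0}

/-- The restricted hemispherical transforms `F̃ₖ^± f`. -/
def FtildePlus (n k : ℕ) (f : E n → ℝ) (v w : E n) : ℝ :=
  ∫ η in {η ∈ sphKplus n k | ⟪η, w⟫ = (0:ℝ)}, f (Tv n k v η) ∂μH[(k : ℝ) - 1]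

def FtildeMinus (n k : ℕ) (f : E n → ℝ) (v w : E n) : ℝ :=
  ∫ η in {η ∈ sphKminus n k | ⟪η, w⟫ = (0:ℝ)}, f (Tv n k v η) ∂μH[(k : ℝ) - 1]

/-- The product of the surface measures on `S^{n-k-1} × S^k`. -/
def pairMeasure (n k : ℕ) : Measure (E n × E n) :=
  (μH[(n : ℝ) - (k : ℝ) - 1].restrict (sphNK n k)).prod (μH[(k : ℝ)].restrict (sphK n k))


/-- The open upper/lower hemispheres `S^{n-1}_±`. -/
def upperHemi (n : ℕ) : Set (E n) := {θ ∈ Metric.sphere (0 : E n) 1 | 0 < lastCoord θ}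
def lowerHemi (n : ℕ) : Set (E n) := {θ ∈ Metric.sphere (0 : E n) 1 | lastCoord θ < 0}

/-- The `k`-dimensional subspace `ξ(v,w) = T_v {η ∈ ℝ^{k+1} : η ⋅ w = 0}`. -/
def xiVW (n k : ℕ) (v w : E n) : Submodule ℝ (E n) :=
  (coordZeroLT n (n - k - 1) ⊓ (ℝ ∙ w)ᗮ).map (Tv n k v)

/-!
On `ℝ^{k+1}` the map `T_v` sends `t e_{n-k} + y` to `t v + y` with `v` a unit vector orthogonal
to `ℝ^k`, so it preserves inner products there; since `k ≥ 1` it also preserves the last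
coordinate. Hence it maps the slices `S^k_± ∩ w^⊥` bijectively and isometrically onto
`S^{n-1}_± ∩ ξ(v,w)`, and `ξ(v,w)` has the dimension `k` of `ℝ^{k+1} ∩ w^⊥`. On `ℝ^{k+1}` it
agrees with a linear isometry of `ℝ^n`, which preserves Hausdorff measure; this gives the equality
of the integrals.
-/

open Module Set Submodule

section IsometricOnSubspace

variable {F : Type*} [NormedAddCommGroup F] [InnerProductSpace ℝ F]
  {T : F →ₗ[ℝ] F} {V : Submodule ℝ F}

theorem injOn_of_norm_map_eq (hT : ∀ x ∈ V, ‖T x‖ = ‖x‖) : InjOn T V := by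
  intro x hx y hy hxy
  rw [← sub_eq_zero, ← norm_eq_zero, ← hT _ (V.sub_mem hx hy), map_sub, hxy, sub_self, norm_zero]

theorem finrank_map_of_norm_map_eq (hT : ∀ x ∈ V, ‖T x‖ = ‖x‖) {W : Submodule ℝ F} (hW : W ≤ V) :
    finrank ℝ (W.map T) = finrank ℝ W := by
  rw [← LinearMap.finrank_range_of_inj (f := T ∘ₗ W.subtype), LinearMap.range_comp, range_subtype]
  intro x y hxy
  exact Subtype.ext <| injOn_of_norm_map_eq hT (hW x.2) (hW y.2) hxy

theorem setIntegral_image_of_norm_map_eq [FiniteDimensional ℝ F] [MeasurableSpace F] [BorelSpace F]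
    {G : Type*} [NormedAddCommGroup G] [NormedSpace ℝ G]
    (hT : ∀ x ∈ V, ‖T x‖ = ‖x‖) {s : Set F} (hs : MeasurableSet s) (hsV : s ⊆ V)
    (d : ℝ) (f : F → G) :
    ∫ θ in T '' s, f θ ∂μH[d] = ∫ η in s, f (T η) ∂μH[d] := by
  let e : F →ₗᵢ[ℝ] F := LinearIsometry.extend ⟨T.domRestrict V, fun x => hT x x.2⟩
  have he : ∀ x ∈ s, e x = T x := fun x hx =>
    LinearIsometry.extend_apply _ (⟨x, hsV hx⟩ : V)
  have he_surj : Function.Surjective e := LinearMap.injective_iff_surjective.mp e.injective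
  have he_mp : MeasurePreserving e (μH[d] : Measure F) μH[d] := by
    refine ⟨e.continuous.measurable, ?_⟩
    rw [e.isometry.map_hausdorffMeasure (Or.inr he_surj), range_eq_univ.mpr he_surj,
      Measure.restrict_univ]
  rw [← image_congr he,
    he_mp.setIntegral_image_emb e.isometry.isClosedEmbedding.measurableEmbedding]
  exact setIntegral_congr_fun hs fun x hx => by rw [he x hx]

end IsometricOnSubspace

theorem finrank_coordZeroLT {n m : ℕ} (hm : m ≤ n) :
    finrank ℝ (coordZeroLT n m) = n - m := by
  classical
  let φ : coordZeroLT n m ≃ₗ[ℝ] ({j : Fin n // m ≤ (j : ℕ)} → ℝ) :=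
    { toFun := fun x j => (x : E n) j
      map_add' := fun _ _ => rfl
      map_smul' := fun _ _ => rfl
      invFun := fun g => ⟨WithLp.toLp 2 fun j => if h : m ≤ (j : ℕ) then g ⟨j, h⟩ else 0,
        fun j hj => dif_neg (by omega)⟩
      left_inv := fun x => by
        ext j
        by_cases h : m ≤ (j : ℕ)
        · simp [h]
        · simp [h, x.2 j (by omega)]
      right_inv := fun g => by
        funext j
        simp [j.2] }
  have hcard := Finset.card_filter_add_card_filter_not (s := Finset.univ)
    (fun j : Fin n => (j : ℕ) < m)
  simp only [not_lt, Fin.card_filter_val_lt, Finset.card_univ, Fintype.card_fin] at hcard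
  rw [φ.finrank_eq, finrank_fintype_fun_eq_card, Fintype.card_subtype]
  omega

theorem continuous_lastCoord {n : ℕ} : Continuous (lastCoord : E n → ℝ) := by
  unfold lastCoord
  split_ifs
  · exact (EuclideanSpace.proj _).continuous
  · exact continuous_const

section Tv

variable {n k : ℕ} {v w : E n}

/-- Coordinate `n - k - 1` (0-based) is the one carrying `e_{n-k}`. -/
theorem Tv_apply (hn : 0 < n) (x : E n) (i : Fin n) :
    Tv n k v x i = x ⟨n - k - 1, by omega⟩ * v i + (if n - k ≤ (i : ℕ) then x i else 0) := by
  classical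
  change EuclideanSpace.projₗ i (Tv n k v x) = _
  rw [Tv, dif_pos (by omega), LinearMap.add_apply, map_add, LinearMap.sum_apply, map_sum]
  simp only [LinearMap.smulRight_apply, coordL, PiLp.projₗ_apply, LinearMap.map_smul,
    EuclideanSpace.projₗ, smul_eq_mul, PiLp.single_apply, mul_ite, mul_one, mul_zero]
  rw [Finset.sum_ite_eq]
  simp

theorem inner_Tv (hkn : k < n) (hv : v ∈ sphNK n k) {x y : E n}
    (hx : x ∈ coordZeroLT n (n - k - 1)) :
    ⟪Tv n k v x, Tv n k v y⟫ = ⟪x, y⟫ := by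
  have hn : 0 < n := by omega
  set m : Fin n := ⟨n - k - 1, by omega⟩
  have hv_sq : ∑ i, v i * v i = 1 := by
    have h := real_inner_self_eq_norm_sq v
    rw [mem_sphere_zero_iff_norm.mp hv.1, one_pow] at h
    simpa only [PiLp.inner_apply, RCLike.inner_apply, conj_trivial] using h
  -- both sums split into the `e_{n-k}` term and the coordinates `≥ n - k`
  have hTv : ∀ i, Tv n k v y i * Tv n k v x i
      = (y m * x m) * (v i * v i) + (if n - k ≤ (i : ℕ) then y i * x i else 0) := by
    intro i
    rw [Tv_apply hn, Tv_apply hn]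
    by_cases h : n - k ≤ (i : ℕ)
    · simp only [if_pos h, hv.2 i h]; ring
    · simp only [if_neg h]; ring
  have hxy : ∀ i, y i * x i
      = (if i = m then y m * x m else 0) + (if n - k ≤ (i : ℕ) then y i * x i else 0) := by
    intro i
    rcases lt_trichotomy (i : ℕ) (n - k - 1) with h | h | h
    · rw [if_neg (Fin.ne_of_val_ne h.ne), if_neg (by omega), hx i h]; ring
    · have him : i = m := Fin.ext h
      rw [if_pos him, if_neg (by omega), him]; ring
    · rw [if_neg (Fin.ne_of_val_ne h.ne'), if_pos (by omega)]; ring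
  simp only [PiLp.inner_apply, RCLike.inner_apply, conj_trivial, hTv]
  rw [Finset.sum_add_distrib, ← Finset.mul_sum, hv_sq, mul_one,
    Finset.sum_congr rfl fun i _ => hxy i, Finset.sum_add_distrib,
    Finset.sum_ite_eq' Finset.univ m, if_pos (Finset.mem_univ m)]

theorem norm_Tv (hkn : k < n) (hv : v ∈ sphNK n k) {x : E n}
    (hx : x ∈ coordZeroLT n (n - k - 1)) : ‖Tv n k v x‖ = ‖x‖ := by
  rw [norm_eq_sqrt_real_inner, norm_eq_sqrt_real_inner, inner_Tv hkn hv hx]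

theorem lastCoord_Tv (hk : 1 ≤ k) (hv : v ∈ coordZeroGE n (n - k)) (x : E n) :
    lastCoord (Tv n k v x) = lastCoord x := by
  unfold lastCoord
  split_ifs with hn
  · have hlast : n - k ≤ n - 1 := by omega
    rw [Tv_apply hn, hv _ hlast, if_pos hlast, mul_zero, zero_add]
  · rfl

theorem finrank_xiVW (hkn : k < n) (hv : v ∈ sphNK n k) (hw : w ∈ sphK n k) :
    finrank ℝ (xiVW n k v w) = k := by
  have hw0 : w ≠ 0 := ne_zero_of_mem_unit_sphere ⟨w, hw.1⟩
  have hV : finrank ℝ (coordZeroLT n (n - k - 1)) = k + 1 := by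
    rw [finrank_coordZeroLT (by omega)]; omega
  have hW := finrank_add_inf_finrank_orthogonal
    ((span_singleton_le_iff_mem w _).mpr hw.2 : (ℝ ∙ w) ≤ coordZeroLT n (n - k - 1))
  rw [finrank_span_singleton hw0, hV, inf_comm] at hW
  rw [xiVW, finrank_map_of_norm_map_eq (fun x hx => norm_Tv hkn hv hx) inf_le_left]
  omega

theorem xiVW_le (hn : 0 < n) : xiVW n k v w ≤ (ℝ ∙ v) ⊔ coordZeroLT n (n - k) := by
  rintro _ ⟨x, -, rfl⟩
  set t := x ⟨n - k - 1, by omega⟩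
  have hrest : Tv n k v x - t • v ∈ coordZeroLT n (n - k) := fun j hj => by
    simp only [PiLp.sub_apply, PiLp.smul_apply, smul_eq_mul, Tv_apply hn,
      if_neg (show ¬ n - k ≤ (j : ℕ) by omega)]
    ring
  rw [← add_sub_cancel (t • v) (Tv n k v x)]
  exact add_mem (mem_sup_left (smul_mem _ _ (mem_span_singleton_self v))) (mem_sup_right hrest)

theorem measurableSet_slice (w : E n) {s : Set ℝ} (hs : MeasurableSet s) :
    MeasurableSet {η ∈ {θ ∈ sphK n k | lastCoord θ ∈ s} | ⟪η, w⟫ = (0 : ℝ)} :=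
  ((isClosed_sphere.measurableSet.inter
    (coordZeroLT n (n - k - 1)).closed_of_finiteDimensional.measurableSet).inter
      (continuous_lastCoord.measurable hs)).inter
    ((continuous_id.inner continuous_const).measurable (measurableSet_singleton 0))

-- `s = Ioi 0` and `s = Iio 0` give the hemispheres `±`.
theorem bijOn_Tv_slice (hk : 1 ≤ k) (hkn : k < n) (hv : v ∈ sphNK n k) (s : Set ℝ) :
    BijOn (Tv n k v) {η ∈ {θ ∈ sphK n k | lastCoord θ ∈ s} | ⟪η, w⟫ = (0 : ℝ)}
      ({θ ∈ sphere (0 : E n) 1 | lastCoord θ ∈ s} ∩ xiVW n k v w) := by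
  have hnorm : ∀ x ∈ coordZeroLT n (n - k - 1), ‖Tv n k v x‖ = ‖x‖ :=
    fun x hx => norm_Tv hkn hv hx
  refine ⟨?_, fun x hx y hy => injOn_of_norm_map_eq hnorm hx.1.1.2 hy.1.1.2, ?_⟩
  · rintro η ⟨⟨⟨hη_sph, hη_V⟩, hη_s⟩, hη_w⟩
    refine ⟨⟨?_, ?_⟩, η, ⟨hη_V, ?_⟩, rfl⟩
    · rwa [mem_sphere_zero_iff_norm, hnorm η hη_V, ← mem_sphere_zero_iff_norm]
    · rwa [lastCoord_Tv hk hv.2]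
    · rwa [SetLike.mem_coe, mem_orthogonal_singleton_iff_inner_right, real_inner_comm]
  · rintro _ ⟨⟨hθ_sph, hθ_s⟩, η, ⟨hη_V, hη_w⟩, rfl⟩
    refine ⟨η, ⟨⟨⟨?_, hη_V⟩, ?_⟩, ?_⟩, rfl⟩
    · rwa [mem_sphere_zero_iff_norm, ← hnorm η hη_V, ← mem_sphere_zero_iff_norm]
    · rwa [lastCoord_Tv hk hv.2] at hθ_s
    · rwa [SetLike.mem_coe, mem_orthogonal_singleton_iff_inner_right, real_inner_comm] at hη_w

theorem setIntegral_slice_eq (hk : 1 ≤ k) (hkn : k < n) (hv : v ∈ sphNK n k)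
    {s : Set ℝ} (hs : MeasurableSet s) (d : ℝ) (f : E n → ℝ) :
    ∫ θ in {θ ∈ sphere (0 : E n) 1 | lastCoord θ ∈ s} ∩ xiVW n k v w, f θ ∂μH[d]
      = ∫ η in {η ∈ {θ ∈ sphK n k | lastCoord θ ∈ s} | ⟪η, w⟫ = (0 : ℝ)},
          f (Tv n k v η) ∂μH[d] := by
  rw [← (bijOn_Tv_slice hk hkn hv s).image_eq]
  exact setIntegral_image_of_norm_map_eq (fun x hx => norm_Tv hkn hv hx)
    (measurableSet_slice w hs) (fun η hη => hη.1.1.2) d f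

end Tv

theorem stmt12 (n k : ℕ) (hk2 : 2 ≤ k) (hk : k < n - 1)
    (f : E n → ℝ) (v w : E n) (hv : v ∈ sphNK n k) (hw : w ∈ sphK n k) :
    Module.finrank ℝ (xiVW n k v w) = k ∧
    xiVW n k v w ≤ (ℝ ∙ v) ⊔ coordZeroLT n (n - k) ∧
    (Set.BijOn (Tv n k v) {η ∈ sphKplus n k | ⟪η, w⟫ = (0:ℝ)}
        (upperHemi n ∩ (xiVW n k v w : Set (E n))) ∧
      ∀ x ∈ {η ∈ sphKplus n k | ⟪η, w⟫ = (0:ℝ)},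
        ∀ y ∈ {η ∈ sphKplus n k | ⟪η, w⟫ = (0:ℝ)},
          ‖Tv n k v x - Tv n k v y‖ = ‖x - y‖) ∧
    (Set.BijOn (Tv n k v) {η ∈ sphKminus n k | ⟪η, w⟫ = (0:ℝ)}
        (lowerHemi n ∩ (xiVW n k v w : Set (E n))) ∧
      ∀ x ∈ {η ∈ sphKminus n k | ⟪η, w⟫ = (0:ℝ)},
        ∀ y ∈ {η ∈ sphKminus n k | ⟪η, w⟫ = (0:ℝ)},
          ‖Tv n k v x - Tv n k v y‖ = ‖x - y‖) ∧
    (IntegrableOn f (upperHemi n ∩ (xiVW n k v w : Set (E n))) μH[(k : ℝ) - 1] →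
      IntegrableOn (fun η => f (Tv n k v η)) {η ∈ sphKplus n k | ⟪η, w⟫ = (0:ℝ)}
        μH[(k : ℝ) - 1] →
      (∫ θ in upperHemi n ∩ (xiVW n k v w : Set (E n)), f θ ∂μH[(k : ℝ) - 1])
        = FtildePlus n k f v w) ∧
    (IntegrableOn f (lowerHemi n ∩ (xiVW n k v w : Set (E n))) μH[(k : ℝ) - 1] →
      IntegrableOn (fun η => f (Tv n k v η)) {η ∈ sphKminus n k | ⟪η, w⟫ = (0:ℝ)}
        μH[(k : ℝ) - 1] →
      (∫ θ in lowerHemi n ∩ (xiVW n k v w : Set (E n)), f θ ∂μH[(k : ℝ) - 1])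
        = FtildeMinus n k f v w) := by
  have hk1 : 1 ≤ k := by omega
  have hkn : k < n := by omega
  have hdist : ∀ x ∈ coordZeroLT n (n - k - 1), ∀ y ∈ coordZeroLT n (n - k - 1),
      ‖Tv n k v x - Tv n k v y‖ = ‖x - y‖ := fun x hx y hy => by
    rw [← map_sub, norm_Tv hkn hv (sub_mem hx hy)]
  exact ⟨finrank_xiVW hkn hv hw, xiVW_le (by omega),
    ⟨bijOn_Tv_slice hk1 hkn hv (Ioi 0), fun x hx y hy => hdist x hx.1.1.2 y hy.1.1.2⟩,
    ⟨bijOn_Tv_slice hk1 hkn hv (Iio 0), fun x hx y hy => hdist x hx.1.1.2 y hy.1.1.2⟩,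
    fun _ _ => setIntegral_slice_eq hk1 hkn hv measurableSet_Ioi _ f,
    fun _ _ => setIntegral_slice_eq hk1 hkn hv measurableSet_Iio _ f⟩

end
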